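/- arXiv:2605.31417 — 4 statements merged into one kernel-verified Lean document; each statement's English description precedes it below -/
import Mathlib

section
/- Let G, B, U be nonnegative reals with G + B > d, B + U ≤ d, and G + U = i, where d ≥ 1 and i ≥ 1. Then G/(G+B) ≥ min(i/(2d), 1/2). -/
theorem stmt_2 (G B U d i : ℝ) (hG : 0 ≤ G) (hB : 0 ≤ B) (hU : 0 ≤ U)
    (hd : 1 ≤ d) (hi : 1 ≤ i)
    (h1 : G + B > d) (h2 : B + U ≤ d) (h3 : G + U = i) :
    G / (G + B) ≥ min (i / (2 * d)) (1 / 2) := by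
  have hpos : (0 : ℝ) < G + B := by linarith
  have hGU : U ≤ G := by linarith
  rcases le_total i d with h | h
  · refine le_trans (min_le_left _ _) ?_
    rw [div_le_div_iff₀ (by linarith) hpos]
    nlinarith [mul_nonneg (sub_nonneg.2 hGU) (sub_nonneg.2 h),
      mul_nonneg (by linarith : (0:ℝ) ≤ i) (by linarith : (0:ℝ) ≤ d - U - B)]
  · refine le_trans (min_le_right _ _) ?_
    rw [div_le_div_iff₀ (by norm_num) hpos]
    linarith
end

section
/- Let d, n be integers with 1 ≤ d ≤ n, and set p_m = min(m/(2d), 1/2) for 1 ≤ m ≤ n. Then for every 1 ≤ i ≤ n, Σ_{j=i}^{n} Π_{m=i}^{j-1} (1-p_m)/p_m ≤ n · C(2d-1, d). -/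
theorem stmt_11 (d n : ℕ) (hd : 1 ≤ d) (hdn : d ≤ n)
    (p : ℕ → ℝ) (hp : ∀ m, p m = min ((m : ℝ) / (2 * d)) (1 / 2)) :
    ∀ i, 1 ≤ i → i ≤ n →
      ∑ j ∈ Finset.Icc i n, ∏ m ∈ Finset.Ico i j, (1 - p m) / p m
        ≤ (n : ℝ) * (Nat.choose (2 * d - 1) d : ℝ) := by
  intro i hi hin
  have hd0 : (0:ℝ) < d := by exact_mod_cast hd
  set g : ℕ → ℝ := fun m => if m < d then ((2*d : ℝ) - m)/m else 1 with hg
  -- ratio computation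
  have hr : ∀ m, 1 ≤ m → (1 - p m)/p m = g m := by
    intro m hm
    have hm0 : (0:ℝ) < m := by exact_mod_cast hm
    by_cases h : m < d
    · have hmd : (m:ℝ) ≤ d := by exact_mod_cast h.le
      have hmin : p m = (m:ℝ)/(2*d) := by
        rw [hp]; apply min_eq_left
        rw [div_le_div_iff₀ (by positivity) (by norm_num)]
        linarith
      rw [hmin, hg]; simp only [if_pos h]
      field_simp
    · have hdm : (d:ℝ) ≤ m := by exact_mod_cast not_lt.mp h
      have hmin : p m = 1/2 := by
        rw [hp]; apply min_eq_right
        rw [div_le_div_iff₀ (by norm_num) (by positivity)]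
        linarith
      rw [hmin, hg]; simp [h]; norm_num
  -- the binomial product formula
  have hB : ∀ k, k ≤ 2*d - 1 → ∏ m ∈ Finset.Icc 1 k, ((2*(d:ℝ)) - m)/m
      = ((2*d-1).choose k : ℝ) := by
    intro k
    induction k with
    | zero => simp
    | succ k ih =>
      intro hk
      have hk' : k ≤ 2*d - 1 := Nat.le_of_succ_le hk
      rw [Finset.prod_Icc_succ_top (Nat.le_add_left 1 k), ih hk']
      have hrec := Nat.choose_succ_right_eq (2*d-1) k
      have hc : ((2*d-1).choose (k+1) : ℝ) * (k+1)
          = ((2*d-1).choose k : ℝ) * ((2*d-1-k : ℕ) : ℝ) := by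
        exact_mod_cast congrArg (Nat.cast : ℕ → ℝ) hrec
      have h1 : 1 + k ≤ 2*d := by omega
      have hcast : ((2*d-1-k : ℕ) : ℝ) = 2*(d:ℝ) - (k+1) := by
        have : 2*d - 1 - k = 2*d - (1+k) := by omega
        rw [this, Nat.cast_sub h1]
        push_cast; ring
      rw [hcast] at hc
      have hk1 : ((k:ℝ)+1) ≠ 0 := by positivity
      field_simp
      push_cast
      nlinarith [hc]
  -- g is ≥ 1 on [1, d-1] and nonneg there
  have hg_one_le : ∀ m ∈ Finset.Icc 1 (d-1), 1 ≤ g m := by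
    intro m hm
    rw [Finset.mem_Icc] at hm
    have hmd : m < d := by omega
    have hm0 : (0:ℝ) < m := by exact_mod_cast hm.1
    have hmdr : (m:ℝ) ≤ d := by exact_mod_cast hmd.le
    rw [hg]; simp only [if_pos hmd]
    rw [le_div_iff₀ hm0]; linarith
  -- each product bounded by C(2d-1, d)
  have hCsymm : (2*d-1).choose (d-1) = (2*d-1).choose d := by
    have h1 : d ≤ 2*d - 1 := by omega
    have h2 : 2*d - 1 - d = d - 1 := by omega
    rw [← h2]; exact Nat.choose_symm h1
  have hstep : ∀ j, ∏ m ∈ Finset.Ico i j, (1 - p m)/p m ≤ ((2*d-1).choose d : ℝ) := by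
    intro j
    have h1 : ∏ m ∈ Finset.Ico i j, (1 - p m)/p m = ∏ m ∈ Finset.Ico i j, g m := by
      apply Finset.prod_congr rfl
      intro m hm
      exact hr m (le_trans hi (Finset.mem_Ico.mp hm).1)
    rw [h1]
    set S := (Finset.Ico i j).filter (· < d) with hS
    have h2 : ∏ m ∈ Finset.Ico i j, g m = ∏ m ∈ S, g m := by
      symm
      apply Finset.prod_subset (Finset.filter_subset _ _)
      intro m hm hnm
      have : ¬ m < d := by
        intro hmd
        exact hnm (Finset.mem_filter.mpr ⟨hm, hmd⟩)
      rw [hg]; simp [this]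
    rw [h2]
    have hsub : S ⊆ Finset.Icc 1 (d-1) := by
      intro m hm
      rw [hS, Finset.mem_filter, Finset.mem_Ico] at hm
      rw [Finset.mem_Icc]
      omega
    calc ∏ m ∈ S, g m ≤ ∏ m ∈ Finset.Icc 1 (d-1), g m := by
          rw [← Finset.prod_sdiff hsub]
          have hone : ∀ (T : Finset ℕ), (∀ m ∈ T, 1 ≤ g m) → (1:ℝ) ≤ ∏ m ∈ T, g m := by
            intro T hT
            calc (1:ℝ) = ∏ _m ∈ T, 1 := by simp
              _ ≤ ∏ m ∈ T, g m := Finset.prod_le_prod (fun _ _ => zero_le_one) hT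
          have hS1 : (1:ℝ) ≤ ∏ m ∈ S, g m := hone S (fun m hm => hg_one_le m (hsub hm))
          have hT1 : (1:ℝ) ≤ ∏ m ∈ Finset.Icc 1 (d-1) \ S, g m :=
            hone _ (fun m hm => hg_one_le m (Finset.mem_sdiff.mp hm).1)
          nlinarith
      _ = ∏ m ∈ Finset.Icc 1 (d-1), ((2*(d:ℝ)) - m)/m := by
          apply Finset.prod_congr rfl
          intro m hm
          rw [Finset.mem_Icc] at hm
          have : m < d := by omega
          rw [hg]; simp [this]
      _ = ((2*d-1).choose (d-1) : ℝ) := hB (d-1) (by omega)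
      _ = ((2*d-1).choose d : ℝ) := by rw [hCsymm]
  calc ∑ j ∈ Finset.Icc i n, ∏ m ∈ Finset.Ico i j, (1 - p m)/p m
      ≤ (Finset.Icc i n).card • ((2*d-1).choose d : ℝ) :=
        Finset.sum_le_card_nsmul _ _ _ (fun j _ => hstep j)
    _ ≤ (n : ℝ) * ((2*d-1).choose d : ℝ) := by
        rw [nsmul_eq_mul, Nat.card_Icc]
        have hcard : n + 1 - i ≤ n := by omega
        have hcardr : ((n + 1 - i : ℕ) : ℝ) ≤ (n : ℝ) := by exact_mod_cast hcard
        have hC0 : (0:ℝ) ≤ ((2*d-1).choose d : ℝ) := by positivity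
        exact mul_le_mul_of_nonneg_right hcardr hC0
end

section
/- Let d, n be integers with 1 ≤ d ≤ n, and let D : {1,...,n} → ℝ≥0 satisfy D_n ≤ 1 and D_i ≤ 1 + ((1-p_i)/p_i) D_{i+1} with p_i = min(i/(2d), 1/2). Then Σ_{i=1}^{n} D_i ≤ (4^d · n^2) / 2. -/
/-!
Write `w i = (1 - p i) / p i ≥ 1`. Unrolling `D i ≤ 1 + w i D (i+1)` from `D n ≤ 1` gives
`D i ≤ (n - i + 1) ∏_{i ≤ m < n} w m`, the additive `1` at each step being absorbed because the
partial products are `≥ 1`. Since `w m = (2d - m)/m` for `m < d` and `w m = 1` for `m ≥ d`, the full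
product is `∏_{m<d} (2d-m)/m = C(2d-1, d-1) = C(2d, d)/2 ≤ 4^d/2`, so every `D i ≤ n 4^d/2`.
-/

open Finset

theorem prod_range_sub_div_succ_eq_choose (N k : ℕ) :
    ∏ j ∈ range k, ((N : ℝ) - j) / (j + 1) = N.choose k := by
  rw [prod_div_distrib, ← descPochhammer_eval_eq_prod_range, Nat.cast_choose_eq_descPochhammer_div,
    ← prod_range_add_one_eq_factorial]
  push_cast
  rfl

theorem two_mul_choose_two_mul_sub_one {d : ℕ} (hd : 0 < d) :
    2 * (2 * d - 1).choose (d - 1) = d.centralBinom := by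
  obtain ⟨e, rfl⟩ := Nat.exists_eq_add_one_of_ne_zero hd.ne'
  rw [Nat.centralBinom_eq_two_mul_choose, show 2 * (e + 1) = 2 * e + 1 + 1 by ring,
    Nat.choose_succ_succ, Nat.add_sub_cancel, Nat.add_sub_cancel, Nat.choose_symm_half]
  ring

theorem prod_Ico_eq_choose {w : ℕ → ℝ} {d n : ℕ} (hdn : d ≤ n)
    (hw_lt : ∀ m, 1 ≤ m → m < d → w m = (2 * d - m) / m) (hw_ge : ∀ m, d ≤ m → w m = 1) :
    ∏ m ∈ Ico 1 n, w m = (2 * d - 1).choose (d - 1) := by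
  rcases Nat.eq_zero_or_pos d with rfl | hd
  · simp [prod_eq_one fun m _ => hw_ge m (Nat.zero_le m)]
  rw [← prod_Ico_consecutive w hd hdn, prod_eq_one fun m hm => hw_ge m (mem_Ico.1 hm).1, mul_one,
    prod_Ico_eq_prod_range, ← prod_range_sub_div_succ_eq_choose]
  refine prod_congr rfl fun j hj => ?_
  rw [hw_lt _ (by omega) (by grind)]
  push_cast [show 1 ≤ 2 * d by omega]
  ring

theorem le_mul_prod_Ico_of_le_one_add_mul {D w : ℕ → ℝ} {i n : ℕ} (hin : i ≤ n)
    (hw : ∀ m, i ≤ m → m < n → 1 ≤ w m)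
    (hDn : D n ≤ 1)
    (hrec : ∀ m, i ≤ m → m < n → D m ≤ 1 + w m * D (m + 1)) :
    D i ≤ (n - i + 1) * ∏ m ∈ Ico i n, w m := by
  refine Nat.decreasingInduction' (P := fun k => D k ≤ (n - k + 1) * ∏ m ∈ Ico k n, w m)
    (fun k hkn hik ih => ?_) hin (by simpa using hDn)
  have hQ : 1 ≤ ∏ m ∈ Ico (k + 1) n, w m :=
    one_le_prod fun m hm => hw m (by grind) (by grind)
  have hwk := hw k hik hkn
  have hwQ : 1 ≤ w k * ∏ m ∈ Ico (k + 1) n, w m := one_le_mul_of_one_le_of_one_le hwk hQ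
  rw [prod_eq_prod_Ico_succ_bot hkn]
  calc D k ≤ 1 + w k * D (k + 1) := hrec k hik hkn
    _ ≤ 1 + w k * ((n - (k + 1 : ℕ) + 1) * ∏ m ∈ Ico (k + 1) n, w m) := by
      gcongr
    _ ≤ (n - k + 1) * (w k * ∏ m ∈ Ico (k + 1) n, w m) := by
      push_cast
      linarith

theorem le_mul_prod_Ico_one_of_le_one_add_mul {D w : ℕ → ℝ} {i n : ℕ} (hi : 1 ≤ i) (hin : i ≤ n)
    (hw : ∀ m, 1 ≤ m → m < n → 1 ≤ w m)
    (hDn : D n ≤ 1)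
    (hrec : ∀ m, 1 ≤ m → m < n → D m ≤ 1 + w m * D (m + 1)) :
    D i ≤ n * ∏ m ∈ Ico 1 n, w m := by
  have hQ : 1 ≤ ∏ m ∈ Ico i n, w m :=
    one_le_prod fun m hm => hw m (hi.trans (mem_Ico.1 hm).1) (mem_Ico.1 hm).2
  have hmono : ∏ m ∈ Ico i n, w m ≤ ∏ m ∈ Ico 1 n, w m :=
    prod_le_prod_of_subset_of_one_le (Ico_subset_Ico_left hi)
      (fun m hm => zero_le_one.trans (hw m (hi.trans (mem_Ico.1 hm).1) (mem_Ico.1 hm).2))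
      (fun m hm _ => hw m (mem_Ico.1 hm).1 (mem_Ico.1 hm).2)
  have hi' : (1 : ℝ) ≤ i := by exact_mod_cast hi
  calc D i ≤ (n - i + 1) * ∏ m ∈ Ico i n, w m :=
        le_mul_prod_Ico_of_le_one_add_mul hin (fun m hm hmn => hw m (hi.trans hm) hmn) hDn
          (fun m hm hmn => hrec m (hi.trans hm) hmn)
    _ ≤ n * ∏ m ∈ Ico 1 n, w m := mul_le_mul (by linarith) hmono (by linarith) (by positivity)

noncomputable def cappedRatio (d i : ℕ) : ℝ := min ((i : ℝ) / (2 * d)) (1 / 2)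

section cappedRatio

variable {d i : ℕ}

theorem cappedRatio_of_le (hd : 0 < d) (hid : i ≤ d) : cappedRatio d i = i / (2 * d) := by
  refine min_eq_left ?_
  rw [div_le_iff₀ (by positivity)]
  linarith [(Nat.cast_le (α := ℝ)).2 hid]

theorem cappedRatio_of_ge (hd : 0 < d) (hdi : d ≤ i) : cappedRatio d i = 1 / 2 := by
  refine min_eq_right ?_
  rw [le_div_iff₀ (by positivity)]
  linarith [(Nat.cast_le (α := ℝ)).2 hdi]

theorem one_le_one_sub_cappedRatio_div (hd : 0 < d) (hi : 0 < i) :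
    1 ≤ (1 - cappedRatio d i) / cappedRatio d i := by
  have hpos : 0 < cappedRatio d i := by
    unfold cappedRatio
    positivity
  have hhalf : cappedRatio d i ≤ 1 / 2 := min_le_right _ _
  rw [le_div_iff₀ hpos]
  linarith

theorem one_sub_cappedRatio_div_of_le (hd : 0 < d) (hi : 0 < i) (hid : i ≤ d) :
    (1 - cappedRatio d i) / cappedRatio d i = (2 * d - i) / i := by
  have : (i : ℝ) ≠ 0 := by positivity
  rw [cappedRatio_of_le hd hid]
  field_simp

theorem one_sub_cappedRatio_div_of_ge (hd : 0 < d) (hdi : d ≤ i) :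
    (1 - cappedRatio d i) / cappedRatio d i = 1 := by
  rw [cappedRatio_of_ge hd hdi]
  norm_num

end cappedRatio

theorem stmt_12_general (d n : ℕ) (hd : 1 ≤ d) (hdn : d ≤ n)
    (D p : ℕ → ℝ)
    (hp : ∀ i, p i = min ((i : ℝ) / (2 * d)) (1 / 2))
    (hDn : D n ≤ 1)
    (hrec : ∀ i, 1 ≤ i → i < n → D i ≤ 1 + ((1 - p i) / p i) * D (i + 1)) :
    ∑ i ∈ Finset.Icc 1 n, D i ≤ (4 ^ d * (n : ℝ) ^ 2) / 2 := by
  obtain rfl : p = cappedRatio d := funext hp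
  have hprod : ∏ m ∈ Ico 1 n, (1 - cappedRatio d m) / cappedRatio d m =
      (2 * d - 1).choose (d - 1) :=
    prod_Ico_eq_choose hdn (fun m hm hmd => one_sub_cappedRatio_div_of_le hd hm hmd.le)
      (fun m hmd => one_sub_cappedRatio_div_of_ge hd hmd)
  have hchoose : ((2 * d - 1).choose (d - 1) : ℝ) ≤ 4 ^ d / 2 := by
    rw [le_div_iff₀ two_pos, mul_comm]
    exact_mod_cast (two_mul_choose_two_mul_sub_one hd).trans_le (Nat.centralBinom_le_four_pow d)
  have hDi : ∀ i ∈ Icc 1 n, D i ≤ n * (4 ^ d / 2) := fun i hi => by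
    refine (le_mul_prod_Ico_one_of_le_one_add_mul (mem_Icc.1 hi).1 (mem_Icc.1 hi).2
      (fun m hm _ => one_le_one_sub_cappedRatio_div hd hm) hDn hrec).trans ?_
    rw [hprod]
    gcongr
  calc ∑ i ∈ Icc 1 n, D i ≤ ∑ i ∈ Icc 1 n, (n : ℝ) * (4 ^ d / 2) := sum_le_sum hDi
    _ = 4 ^ d * (n : ℝ) ^ 2 / 2 := by
      rw [sum_const, Nat.card_Icc, nsmul_eq_mul, Nat.add_sub_cancel]
      ring

theorem stmt_12 (d n : ℕ) (hd : 1 ≤ d) (hdn : d ≤ n)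
    (D p : ℕ → ℝ)
    (hp : ∀ i, p i = min ((i : ℝ) / (2 * d)) (1 / 2))
    (hD0 : ∀ i, 1 ≤ i → i ≤ n → 0 ≤ D i)
    (hDn : D n ≤ 1)
    (hrec : ∀ i, 1 ≤ i → i < n → D i ≤ 1 + ((1 - p i) / p i) * D (i + 1)) :
    ∑ i ∈ Finset.Icc 1 n, D i ≤ (4 ^ d * (n : ℝ) ^ 2) / 2 :=
  stmt_12_general d n hd hdn D p hp hDn hrec
end

section
/- Consider a random walk on states {0, 1, ..., n} that at each step from state i > 0 moves to i-1 with probability at least p_i = min(i/(2d), 1/2) and otherwise to i+1 (state n moves to n-1 with probability 1, state 0 is absorbing). Starting from any state i0 ≤ n, the expected number of steps until absorption at 0 is at most 4^d · n^2. -/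
/-!
Write `D i = h i - h (i - 1)`, so that `q i * D i = 1 + (1 - q i) * D (i + 1)` and `D n = 1`.
Any `B ≥ 0` satisfying this relation as an inequality `≤ p i * B i` for smaller probabilities
`p i ≤ q i` dominates `D`, because `(1 + (1 - q) y) / q` decreases in `q`. For `p ≤ 1/2`,
`B i = (2 (n - i) + 1) ∏_{i ≤ j < n} (1 - p j) / p j` is such a supersolution: for `p ≡ 1/2` it is
the exact solution `2 (n - i) + 1`, and the odds factors, all at least `1`, absorb the extra drift
towards `n`. For `p j = min (j / 2d) (1/2)` the whole odds product is
`∏_{1 ≤ j < d} (2d - j) / j = C(2d - 1, d - 1) ≤ 4 ^ (d - 1)`, hence `D i ≤ 2 n 4 ^ (d - 1)`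
and `h i0 = ∑_{i ≤ i0} D i ≤ 4 ^ d n ^ 2`.
-/

open Finset
open scoped Nat

lemma le_of_recurrence_step {p q x x' y y' : ℝ} (hp : 0 < p) (hpq : p ≤ q) (hq : q ≤ 1)
    (hy' : 0 ≤ y') (hx' : x' ≤ y') (hx : q * x = 1 + (1 - q) * x')
    (hy : 1 + (1 - p) * y' ≤ p * y) : x ≤ y := by
  have hx_le : q * (x + y') ≤ 1 + y' := by
    nlinarith [mul_le_mul_of_nonneg_left hx' (sub_nonneg.2 hq)]
  have hy_ge : 1 + y' ≤ p * (y + y') := by linarith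
  have hyy' : 0 ≤ y + y' := by nlinarith
  have hxy : q * (x + y') ≤ q * (y + y') :=
    hx_le.trans (hy_ge.trans (mul_le_mul_of_nonneg_right hpq hyy'))
  linarith [le_of_mul_le_mul_left hxy (hp.trans_le hpq)]

lemma le_of_recurrence_of_supersolution {n : ℕ} {p q D B : ℕ → ℝ}
    (hpq : ∀ i, 1 ≤ i → i < n → 0 < p i ∧ p i ≤ q i ∧ q i ≤ 1)
    (hD : ∀ i, 1 ≤ i → i < n → q i * D i = 1 + (1 - q i) * D (i + 1))
    (hB : ∀ i, 1 ≤ i → i < n → 1 + (1 - p i) * B (i + 1) ≤ p i * B i)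
    (hB0 : ∀ i, 1 ≤ i → i ≤ n → 0 ≤ B i) (hn : D n ≤ B n) :
    ∀ i, 1 ≤ i → i ≤ n → D i ≤ B i := by
  intro i hi hin
  revert hi
  induction hin using Nat.decreasingInduction with
  | self => exact fun _ => hn
  | of_succ k hk ih =>
    intro hi
    obtain ⟨hp, hpq, hq⟩ := hpq k hi hk
    exact le_of_recurrence_step hp hpq hq (hB0 (k + 1) (by omega) hk) (ih (by omega))
      (hD k hi hk) (hB k hi hk)

noncomputable def oddsProd (p : ℕ → ℝ) (i n : ℕ) : ℝ := ∏ j ∈ Ico i n, (1 - p j) / p j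

noncomputable def oddsBound (p : ℕ → ℝ) (n i : ℕ) : ℝ := (2 * ((n : ℝ) - i) + 1) * oddsProd p i n

lemma one_le_odds {x : ℝ} (hx : 0 < x) (hx2 : x ≤ 1 / 2) : 1 ≤ (1 - x) / x := by
  rw [le_div_iff₀ hx]; linarith

section OddsProd

variable {p : ℕ → ℝ} {i n : ℕ}

@[simp] lemma oddsProd_self (p : ℕ → ℝ) (n : ℕ) : oddsProd p n n = 1 := by
  simp [oddsProd]

lemma oddsProd_eq_mul (hi : i < n) : oddsProd p i n = (1 - p i) / p i * oddsProd p (i + 1) n :=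
  prod_eq_prod_Ico_succ_bot hi _

lemma one_le_oddsProd (hp : ∀ j ∈ Ico i n, 0 < p j ∧ p j ≤ 1 / 2) : 1 ≤ oddsProd p i n :=
  one_le_prod fun j hj => one_le_odds (hp j hj).1 (hp j hj).2

lemma oddsProd_le_oddsProd {k : ℕ} (hp : ∀ j ∈ Ico k n, 0 < p j ∧ p j ≤ 1 / 2)
    (hki : k ≤ i) (hin : i ≤ n) : oddsProd p i n ≤ oddsProd p k n := by
  have hfac : 1 ≤ oddsProd p k i :=
    one_le_oddsProd fun j hj => hp j (Ico_subset_Ico_right hin hj)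
  have htail : 1 ≤ oddsProd p i n :=
    one_le_oddsProd fun j hj => hp j (Ico_subset_Ico_left hki hj)
  have hsplit : oddsProd p k i * oddsProd p i n = oddsProd p k n :=
    prod_Ico_consecutive _ hki hin
  nlinarith

lemma oddsBound_nonneg (hp : ∀ j ∈ Ico i n, 0 < p j ∧ p j ≤ 1 / 2)
    (hin : i ≤ n) : 0 ≤ oddsBound p n i := by
  have hin' : (i : ℝ) ≤ n := by exact_mod_cast hin
  unfold oddsBound
  nlinarith [one_le_oddsProd hp]

lemma oddsBound_supersolution (hp : ∀ j ∈ Ico i n, 0 < p j ∧ p j ≤ 1 / 2)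
    (hin : i < n) : 1 + (1 - p i) * oddsBound p n (i + 1) ≤ p i * oddsBound p n i := by
  obtain ⟨hpi, hpi2⟩ := hp i (left_mem_Ico.2 hin)
  have hF : 1 ≤ oddsProd p (i + 1) n :=
    one_le_oddsProd fun j hj => hp j (Ico_subset_Ico_left i.le_succ hj)
  have hodds : p i * ((1 - p i) / p i) = 1 - p i := mul_div_cancel₀ _ hpi.ne'
  have key : p i * ((2 * ((n : ℝ) - i) + 1) * ((1 - p i) / p i * oddsProd p (i + 1) n))
      = (2 * ((n : ℝ) - i) + 1) * (1 - p i) * oddsProd p (i + 1) n := by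
    linear_combination (2 * ((n : ℝ) - i) + 1) * oddsProd p (i + 1) n * hodds
  unfold oddsBound
  rw [oddsProd_eq_mul hin, key]
  push_cast
  nlinarith [mul_nonneg (by linarith : (0 : ℝ) ≤ 1 - p i)
    (by linarith : 0 ≤ oddsProd p (i + 1) n - 1)]

lemma oddsBound_le (hp : ∀ j ∈ Ico 1 n, 0 < p j ∧ p j ≤ 1 / 2)
    (hi : 1 ≤ i) (hin : i ≤ n) : oddsBound p n i ≤ 2 * n * oddsProd p 1 n := by
  have hF := oddsProd_le_oddsProd hp hi hin
  have hF1 := one_le_oddsProd fun j hj => hp j (Ico_subset_Ico_left hi hj)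
  have hi' : (1 : ℝ) ≤ i := by exact_mod_cast hi
  have hin' : (i : ℝ) ≤ n := by exact_mod_cast hin
  unfold oddsBound
  nlinarith

end OddsProd

lemma prod_Ico_two_mul_sub_div (m : ℕ) :
    ∏ j ∈ Ico 1 (m + 1), ((2 * (m + 1) - j : ℝ) / j) = (2 * m + 1).choose m := by
  have hden : ∏ j ∈ Ico 1 (m + 1), (j : ℝ) = m ! := by
    rw [← Nat.cast_prod, prod_Ico_id_eq_factorial]
  have hnum : ∏ j ∈ Ico 1 (m + 1), (2 * (m + 1) - j : ℝ) = m ! * (2 * m + 1).choose m := by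
    rw [← Nat.cast_mul, ← Nat.descFactorial_eq_factorial_mul_choose,
      Nat.descFactorial_eq_prod_range, prod_Ico_eq_prod_range, Nat.cast_prod, Nat.add_sub_cancel]
    refine prod_congr rfl fun k hk => ?_
    rw [Nat.cast_sub (by simp at hk; omega)]
    push_cast; ring
  rw [prod_div_distrib, hnum, hden, mul_div_cancel_left₀ _ (by positivity)]

noncomputable def downProb (d j : ℕ) : ℝ := min ((j : ℝ) / (2 * d)) (1 / 2)

section DownProb

variable {d j : ℕ}

lemma downProb_pos (hd : 1 ≤ d) (hj : 1 ≤ j) : 0 < downProb d j :=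
  lt_min (div_pos (by exact_mod_cast hj) (by positivity)) one_half_pos

lemma downProb_le_half : downProb d j ≤ 1 / 2 := min_le_right _ _

lemma odds_downProb_of_lt (hj : 1 ≤ j) (hjd : j < d) :
    (1 - downProb d j) / downProb d j = (2 * (d : ℝ) - j) / j := by
  have hj' : (0 : ℝ) < j := by exact_mod_cast hj
  have hjd' : (j : ℝ) ≤ d := by exact_mod_cast hjd.le
  have hp : downProb d j = j / (2 * d) := min_eq_left (by rw [div_le_iff₀ (by linarith)]; linarith)
  rw [hp]
  field_simp [(by linarith : (d : ℝ) ≠ 0)]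

lemma odds_downProb_of_le (hd : 1 ≤ d) (hdj : d ≤ j) : (1 - downProb d j) / downProb d j = 1 := by
  have hd' : (0 : ℝ) < d := by exact_mod_cast hd
  have hdj' : (d : ℝ) ≤ j := by exact_mod_cast hdj
  have hp : downProb d j = 1 / 2 := min_eq_right (by rw [le_div_iff₀ (by linarith)]; linarith)
  norm_num [hp]

lemma oddsProd_downProb_le {n : ℕ} (hd : 1 ≤ d) (hdn : d ≤ n) :
    oddsProd (downProb d) 1 n ≤ 4 ^ (d - 1) := by
  obtain ⟨m, rfl⟩ : ∃ m, d = m + 1 := ⟨d - 1, by omega⟩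
  have hlow : oddsProd (downProb (m + 1)) 1 (m + 1) = (2 * m + 1).choose m := by
    rw [oddsProd, ← prod_Ico_two_mul_sub_div]
    refine prod_congr rfl fun j hj => ?_
    rw [mem_Ico] at hj
    rw [odds_downProb_of_lt hj.1 hj.2]
    push_cast; ring
  have hhigh : oddsProd (downProb (m + 1)) (m + 1) n = 1 :=
    prod_eq_one fun j hj => odds_downProb_of_le hd (mem_Ico.1 hj).1
  have hsplit : oddsProd (downProb (m + 1)) 1 (m + 1) * oddsProd (downProb (m + 1)) (m + 1) n
      = oddsProd (downProb (m + 1)) 1 n := prod_Ico_consecutive _ hd hdn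
  rw [← hsplit, hlow, hhigh, mul_one, Nat.add_sub_cancel]
  exact_mod_cast Nat.choose_middle_le_pow m

end DownProb

theorem stmt_13_general (d n : ℕ) (hd : 1 ≤ d) (hdn : d ≤ n)
    (h q : ℕ → ℝ)
    (hq : ∀ i, 1 ≤ i → i < n → min ((i : ℝ) / (2 * d)) (1 / 2) ≤ q i ∧ q i ≤ 1)
    (h0 : h 0 = 0)
    (hn : h n = 1 + h (n - 1))
    (hstep : ∀ i, 1 ≤ i → i < n →
      h i = 1 + q i * h (i - 1) + (1 - q i) * h (i + 1)) :
    ∀ i0, i0 ≤ n → h i0 ≤ 4 ^ d * (n : ℝ) ^ 2 := by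
  intro i0 hi0
  have hp : ∀ j ∈ Ico 1 n, 0 < downProb d j ∧ downProb d j ≤ 1 / 2 :=
    fun j hj => ⟨downProb_pos hd (mem_Ico.1 hj).1, downProb_le_half⟩
  have hdiff : ∀ i, 1 ≤ i → i ≤ n → h i - h (i - 1) ≤ oddsBound (downProb d) n i :=
    le_of_recurrence_of_supersolution (D := fun i => h i - h (i - 1))
      (fun i hi hin => ⟨downProb_pos hd hi, (hq i hi hin).1, (hq i hi hin).2⟩)
      (fun i hi hin => by simp only [Nat.add_sub_cancel]; linear_combination hstep i hi hin)
      (fun i hi hin => oddsBound_supersolution (fun j hj => hp j (Ico_subset_Ico_left hi hj)) hin)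
      (fun i hi hin => oddsBound_nonneg (fun j hj => hp j (Ico_subset_Ico_left hi hj)) hin)
      (by simp [oddsBound, hn])
  have hbound : ∀ k ∈ range i0, h (k + 1) - h k ≤ 2 * n * 4 ^ (d - 1) := fun k hk => by
    have hkn : k + 1 ≤ n := by simp at hk; omega
    calc h (k + 1) - h k ≤ oddsBound (downProb d) n (k + 1) := hdiff (k + 1) k.succ_pos hkn
      _ ≤ 2 * n * oddsProd (downProb d) 1 n := oddsBound_le hp k.succ_pos hkn
      _ ≤ 2 * n * 4 ^ (d - 1) := by gcongr; exact oddsProd_downProb_le hd hdn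
  have hi0' : (i0 : ℝ) ≤ n := by exact_mod_cast hi0
  calc h i0 = ∑ k ∈ range i0, (h (k + 1) - h k) := by rw [sum_range_sub, h0, sub_zero]
    _ ≤ ∑ k ∈ range i0, 2 * (n : ℝ) * 4 ^ (d - 1) := sum_le_sum hbound
    _ = i0 * (2 * n * 4 ^ (d - 1)) := by rw [sum_const, card_range, nsmul_eq_mul]
    _ ≤ n * (2 * n * 4 ^ (d - 1)) := by gcongr
    _ ≤ 4 ^ d * (n : ℝ) ^ 2 := by
      rw [← mul_pow_sub_one (by omega : d ≠ 0)]
      nlinarith [mul_nonneg (pow_nonneg (by norm_num : (0 : ℝ) ≤ 4) (d - 1)) (sq_nonneg (n : ℝ))]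

/-- Abstract formalization of the random walk: `h i` is the expected number of
steps until absorption at `0` when starting from state `i`, and `q i` is the
probability of moving from `i` to `i - 1`. -/
theorem stmt_13 (d n : ℕ) (hd : 1 ≤ d) (hdn : d ≤ n)
    (h q : ℕ → ℝ)
    (hq : ∀ i, 1 ≤ i → i < n → min ((i : ℝ) / (2 * d)) (1 / 2) ≤ q i ∧ q i ≤ 1)
    (hnonneg : ∀ i, i ≤ n → 0 ≤ h i)
    (h0 : h 0 = 0)
    (hn : h n = 1 + h (n - 1))
    (hstep : ∀ i, 1 ≤ i → i < n →
      h i = 1 + q i * h (i - 1) + (1 - q i) * h (i + 1)) :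
    ∀ i0, i0 ≤ n → h i0 ≤ 4 ^ d * (n : ℝ) ^ 2 :=
  stmt_13_general d n hd hdn h q hq h0 hn hstep
end
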